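/- arXiv:2406.16923 — 9 statements merged into one kernel-verified Lean document; each statement's English description precedes it below -/
import Mathlib

section
/- In a complete lattice, the join of a chained set of connected elements is connected. -/
variable {L : Type*} [CompleteLattice L]

def Separated (S : Set L) : Prop :=
  (⊥ : L) ∉ S ∧ ∀ s ∈ S, ∀ t ∈ S, s ≠ t → s ⊓ t = ⊥

def Connected (a : L) : Prop :=
  ∀ S : Set L, Separated S → a ≤ sSup S → ∃ s ∈ S, a ≤ s

def Chained (C : Set L) : Prop :=
  C.Nonempty ∧ ∀ x ∈ C, ∀ y ∈ C,
    Relation.ReflTransGen (fun a b => b ∈ C ∧ a ⊓ b ≠ ⊥) x y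

/-!
Each element of `C` lies below some member of the separated set `S`, and two elements of `C`
that meet nontrivially must lie below the same member, since distinct members meet to `⊥`.
Following a chain from a fixed `c₀ ∈ C` therefore puts all of `C`, hence `sSup C`, below the
member chosen for `c₀`.
-/

theorem Separated.le_of_le_of_inf_ne_bot {S : Set L} (hS : Separated S) {s t a b : L}
    (hs : s ∈ S) (ht : t ∈ S) (ha : a ≤ s) (hb : b ≤ t) (hab : a ⊓ b ≠ ⊥) : b ≤ s := by
  obtain rfl | hne := eq_or_ne s t
  · exact hb
  · exact absurd (le_bot_iff.mp (hS.2 s hs t ht hne ▸ inf_le_inf ha hb)) hab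

theorem Chained.forall_of_mem {C : Set L} (hC : Chained C) {P : L → Prop}
    (hP : ∀ a ∈ C, ∀ b ∈ C, a ⊓ b ≠ ⊥ → P a → P b) {c₀ : L} (hc₀ : c₀ ∈ C) (h : P c₀) :
    ∀ c ∈ C, P c := by
  have reachable : ∀ c, Relation.ReflTransGen (fun a b => b ∈ C ∧ a ⊓ b ≠ ⊥) c₀ c →
      c ∈ C ∧ P c := by
    intro c hchain
    induction hchain with
    | refl => exact ⟨hc₀, h⟩
    | tail _ hstep ih => exact ⟨hstep.1, hP _ ih.1 _ hstep.1 hstep.2 ih.2⟩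
  exact fun c hc => (reachable c (hC.2 c₀ hc₀ c hc)).2

theorem join_of_chained_connected (C : Set L)
    (hC : Chained C) (hconn : ∀ c ∈ C, Connected c) :
    Connected (sSup C) := by
  intro S hS hle
  have below : ∀ c ∈ C, ∃ s ∈ S, c ≤ s := fun c hc =>
    hconn c hc S hS ((le_sSup hc).trans hle)
  obtain ⟨c₀, hc₀⟩ := hC.1
  obtain ⟨s₀, hs₀, hc₀s₀⟩ := below c₀ hc₀
  refine ⟨s₀, hs₀, sSup_le <| hC.forall_of_mem (P := (· ≤ s₀)) ?_ hc₀ hc₀s₀⟩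
  intro a _ b hb hab ha
  obtain ⟨s, hs, hbs⟩ := below b hb
  exact hS.le_of_le_of_inf_ne_bot hs₀ hs ha hbs hab
end

section
/- In a complete lattice, if S and T are separated sets consisting of connected elements and ⋁S = ⋁T, then S = T. -/
/-! Each connected `s ∈ S` lies below some `t ∈ T`, which in turn lies below some `s' ∈ S`.
In a separated set comparable members coincide (their meet is the smaller one, which is not `⊥`),
so `s = s'` and hence `s = t`. -/

variable {L : Type*} [CompleteLattice L]

theorem Separated.eq_of_le {S : Set L} (hS : Separated S) {s t : L} (hs : s ∈ S) (ht : t ∈ S)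
    (hst : s ≤ t) : s = t := by
  by_contra hne
  have hbot : s = ⊥ := (inf_eq_left.mpr hst).symm.trans (hS.2 s hs t ht hne)
  exact hS.1 (hbot ▸ hs)

theorem subset_of_sSup_eq {S T : Set L} (hS : Separated S) (hT : Separated T)
    (hSc : ∀ s ∈ S, Connected s) (hTc : ∀ t ∈ T, Connected t) (h : sSup S = sSup T) :
    S ⊆ T := by
  intro s hs
  obtain ⟨t, ht, hst⟩ := hSc s hs T hT (h ▸ le_sSup hs)
  obtain ⟨s', hs', hts'⟩ := hTc t ht S hS (h ▸ le_sSup ht)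
  have hss' : s = s' := hS.eq_of_le hs hs' (hst.trans hts')
  have hs_eq_t : s = t := le_antisymm hst (hss' ▸ hts')
  exact hs_eq_t ▸ ht

theorem separated_sets_unique (S T : Set L)
    (hS : Separated S) (hT : Separated T)
    (hSc : ∀ s ∈ S, Connected s) (hTc : ∀ t ∈ T, Connected t)
    (h : sSup S = sSup T) : S = T :=
  (subset_of_sSup_eq hS hT hSc hTc h).antisymm (subset_of_sSup_eq hT hS hTc hSc h.symm)
end

section
/- In a locally connected complete lattice, every element a satisfying condition (E2) (a ≠ 0, and a = x ∨ y with x ∧ y = 0 implies x = 0 or y = 0) is connected, i.e., satisfies (E4). -/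
/-!
Given a separated cover `S` of `a` and `s ∈ S`, split `a` as `(a ⊓ s) ⊔ (a ⊓ sSup (S \ {s}))`.
In a locally connected lattice this is a genuine decomposition, since each connected piece of `a`
lies below a single member of `S`, and the two parts are disjoint, since a connected element below
both would lie below two distinct members of `S`. Condition (E2) kills one part; choosing `s` with
`a ⊓ s ≠ ⊥` leaves `a ≤ s`.
-/

variable {L : Type*} [CompleteLattice L]

def LocallyConnected (L : Type*) [CompleteLattice L] : Prop :=
  ∀ x : L, ∃ C : Set L, (∀ c ∈ C, Connected c) ∧ x = sSup C

theorem Separated.mono {S T : Set L} (hS : Separated S) (hTS : T ⊆ S) : Separated T :=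
  ⟨fun h => hS.1 (hTS h), fun s hs t ht => hS.2 s (hTS hs) t (hTS ht)⟩

namespace LocallyConnected

variable (hL : LocallyConnected L) {S : Set L} {a : L}
include hL

theorem eq_bot_of_forall_connected {x : L} (h : ∀ c, Connected c → c ≤ x → c = ⊥) : x = ⊥ := by
  obtain ⟨C, hC, rfl⟩ := hL x
  exact sSup_eq_bot.mpr fun c hc => h c (hC c hc) (le_sSup hc)

theorem inf_sSup_diff_singleton_eq_bot (hS : Separated S) {s : L} (hs : s ∈ S) :
    s ⊓ sSup (S \ {s}) = ⊥ :=
  hL.eq_bot_of_forall_connected fun c hc hcle => by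
    obtain ⟨t, ⟨htS, hts⟩, hct⟩ := hc _ (hS.mono Set.sdiff_subset) (hcle.trans inf_le_right)
    exact eq_bot_mono (le_inf (hcle.trans inf_le_left) hct) (hS.2 s hs t htS (Ne.symm hts))

theorem exists_inf_ne_bot (hS : Separated S) (ha : a ≠ ⊥) (haS : a ≤ sSup S) :
    ∃ s ∈ S, a ⊓ s ≠ ⊥ := by
  by_contra! h
  refine ha (hL.eq_bot_of_forall_connected fun c hc hca => ?_)
  obtain ⟨s, hs, hcs⟩ := hc S hS (hca.trans haS)
  exact eq_bot_mono (le_inf hca hcs) (h s hs)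

theorem eq_inf_sup_inf_sSup_diff_singleton (hS : Separated S) (haS : a ≤ sSup S) (s : L) :
    a = a ⊓ s ⊔ a ⊓ sSup (S \ {s}) := by
  refine le_antisymm ?_ (sup_le inf_le_left inf_le_left)
  obtain ⟨C, hC, hCa⟩ := hL a
  refine hCa.le.trans (sSup_le fun c hc => ?_)
  have hca : c ≤ a := hCa ▸ le_sSup hc
  obtain ⟨t, htS, hct⟩ := hC c hc S hS (hca.trans haS)
  by_cases hts : t = s
  · exact le_sup_of_le_left (le_inf hca (hts ▸ hct))
  · exact le_sup_of_le_right (le_inf hca (hct.trans (le_sSup ⟨htS, hts⟩)))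

end LocallyConnected

theorem e2_implies_connected_of_locallyConnected
    (hlc : ∀ x : L, ∃ C : Set L, (∀ c ∈ C, Connected c) ∧ x = sSup C)
    (a : L) (ha : a ≠ ⊥)
    (hE2 : ∀ x y : L, x ⊓ y = ⊥ → a = x ⊔ y → x = ⊥ ∨ y = ⊥) :
    Connected a := by
  intro S hS haS
  have hL : LocallyConnected L := hlc
  obtain ⟨s, hs, has⟩ := hL.exists_inf_ne_bot hS ha haS
  have hsplit := hL.eq_inf_sup_inf_sSup_diff_singleton hS haS s
  have hdisj : a ⊓ s ⊓ (a ⊓ sSup (S \ {s})) = ⊥ :=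
    eq_bot_mono (inf_le_inf inf_le_right inf_le_right) (hL.inf_sSup_diff_singleton_eq_bot hS hs)
  rcases hE2 _ _ hdisj hsplit with h | h
  · exact absurd h has
  · rw [h, sup_bot_eq] at hsplit
    exact ⟨s, hs, inf_eq_left.mp hsplit.symm⟩
end

section
/- In a locally connected complete lattice, for every element x there exists a separated set S of connected elements with x = ⋁S. -/
/-! The components of `x`, i.e. the maximal connected elements below `x`, do the job. The join of
connected elements that all meet one of them nontrivially is connected; this gives Zorn's lemma
along chains, so every connected element below `x` lies in a component, and it shows that two
distinct components meet to `⊥`. Local connectedness then makes `x` the join of its components. -/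

variable {L : Type*} [CompleteLattice L]

lemma Separated.eq_of_inf_ne_bot {S : Set L} (hS : Separated S) {s t a b : L} (hs : s ∈ S)
    (ht : t ∈ S) (has : a ≤ s) (hbt : b ≤ t) (hab : a ⊓ b ≠ ⊥) : s = t := by
  by_contra hst
  exact hab (le_bot_iff.mp ((inf_le_inf has hbt).trans (hS.2 s hs t ht hst).le))

lemma Connected.ne_bot {a : L} (h : Connected a) : a ≠ ⊥ := by
  intro hbot
  obtain ⟨s, hs, -⟩ := h ∅ ⟨by simp, by simp⟩ (by simp [hbot])
  exact hs

lemma connected_sSup_of_inf_ne_bot {C : Set L} (hC : ∀ c ∈ C, Connected c) {y : L}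
    (hy : y ∈ C) (hyC : ∀ c ∈ C, y ⊓ c ≠ ⊥) : Connected (sSup C) := by
  intro S hS hle
  obtain ⟨s, hs, hys⟩ := hC y hy S hS ((le_sSup hy).trans hle)
  refine ⟨s, hs, sSup_le fun c hc => ?_⟩
  obtain ⟨t, ht, hct⟩ := hC c hc S hS ((le_sSup hc).trans hle)
  rwa [hS.eq_of_inf_ne_bot hs ht hys hct (hyC c hc)]

lemma Connected.sup {a b : L} (ha : Connected a) (hb : Connected b) (hab : a ⊓ b ≠ ⊥) :
    Connected (a ⊔ b) := by
  rw [← sSup_pair]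
  refine connected_sSup_of_inf_ne_bot (by simp [ha, hb]) (Set.mem_insert a {b}) ?_
  simpa [inf_idem, ha.ne_bot] using hab

lemma connected_sSup_of_isChain {C : Set L} (hC : ∀ c ∈ C, Connected c)
    (hchain : IsChain (· ≤ ·) C) {y : L} (hy : y ∈ C) : Connected (sSup C) := by
  refine connected_sSup_of_inf_ne_bot hC hy fun c hc => ?_
  rcases hchain.total hy hc with hyc | hcy
  · simpa [inf_eq_left.mpr hyc] using (hC y hy).ne_bot
  · simpa [inf_eq_right.mpr hcy] using (hC c hc).ne_bot

def components (x : L) : Set L :=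
  {m | Maximal (fun b => Connected b ∧ b ≤ x) m}

lemma exists_le_mem_components {x c : L} (hc : Connected c) (hcx : c ≤ x) :
    ∃ m ∈ components x, c ≤ m := by
  obtain ⟨m, hcm, hm⟩ := zorn_le_nonempty₀ {b | Connected b ∧ b ≤ x}
    (fun C hCP hchain y hy => ⟨sSup C,
      ⟨connected_sSup_of_isChain (fun c hc => (hCP hc).1) hchain hy,
        sSup_le fun c hc => (hCP hc).2⟩,
      fun _ => le_sSup⟩) c ⟨hc, hcx⟩
  exact ⟨m, hm, hcm⟩

lemma separated_components (x : L) : Separated (components x) := by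
  refine ⟨fun hbot => hbot.1.1.ne_bot rfl, fun s hs t ht hst => ?_⟩
  by_contra hne
  have hsup : Connected (s ⊔ t) ∧ s ⊔ t ≤ x :=
    ⟨hs.1.1.sup ht.1.1 hne, sup_le hs.1.2 ht.1.2⟩
  exact hst (le_antisymm (le_sup_left.trans (ht.2 hsup le_sup_right))
    (le_sup_right.trans (hs.2 hsup le_sup_left)))

lemma sSup_components_of_eq_sSup {x : L} {C : Set L} (hC : ∀ c ∈ C, Connected c)
    (hxC : x = sSup C) : sSup (components x) = x := by
  refine le_antisymm (sSup_le fun m hm => hm.1.2) ?_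
  conv_lhs => rw [hxC]
  refine sSup_le fun c hc => ?_
  obtain ⟨m, hm, hcm⟩ := exists_le_mem_components (hC c hc) (hxC ▸ le_sSup hc)
  exact hcm.trans (le_sSup hm)

theorem exists_separated_decomposition
    (hlc : ∀ x : L, ∃ C : Set L, (∀ c ∈ C, Connected c) ∧ x = sSup C)
    (x : L) :
    ∃ S : Set L, Separated S ∧ (∀ s ∈ S, Connected s) ∧ x = sSup S := by
  obtain ⟨C, hC, hxC⟩ := hlc x
  exact ⟨components x, separated_components x, fun m hm => hm.1.1,
    (sSup_components_of_eq_sSup hC hxC).symm⟩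
end

section
/- In a chainmail, every mail-connected subset has a join. -/
/-!
Fix `c₀ ∈ C` and let `D` be the set of elements above `c₀` and below every upper bound of `C`.
`D` is a mail (bounded below by `c₀`), so it has a join, and `D` has the same upper bounds as `C`
because it is cofinal for `C`: walking from `c₀` along a chain of linked elements of `C`, the join
of the current element of `D` with the next element of the chain exists (the two share a lower
bound) and stays in `D`.
-/

variable {P : Type*} [PartialOrder P]

def Mail (M : Set P) : Prop :=
  M.Nonempty ∧ ∃ b : P, ∀ x ∈ M, b ≤ x

def IsChainmail (P : Type*) [PartialOrder P] : Prop :=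
  ∀ M : Set P, Mail M → ∃ j : P, IsLUB M j

def MailConnected (C : Set P) : Prop :=
  C.Nonempty ∧ ∀ c ∈ C, ∀ d ∈ C,
    Relation.ReflTransGen
      (fun x y => x ∈ C ∧ y ∈ C ∧ ∃ b : P, b ≤ x ∧ b ≤ y) c d

open Set Relation

def MailLinked (C : Set P) (x y : P) : Prop :=
  x ∈ C ∧ y ∈ C ∧ ∃ b : P, b ≤ x ∧ b ≤ y

lemma upperBounds_eq_of_isCofinalFor {C D : Set P} (hCD : IsCofinalFor C D)
    (hD : D ⊆ lowerBounds (upperBounds C)) : upperBounds D = upperBounds C :=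
  (upperBounds_mono_of_isCofinalFor hCD).antisymm fun _u hu _d hd => hD hd hu

namespace IsChainmail

lemma exists_isLUB_pair (h : IsChainmail P) {b x y : P} (hx : b ≤ x) (hy : b ≤ y) :
    ∃ s, IsLUB {x, y} s :=
  h _ ⟨insert_nonempty x {y}, b, by simp [hx, hy]⟩

lemma exists_ge_of_reflTransGen_mailLinked (h : IsChainmail P) {C : Set P} {c₀ c : P}
    (hc₀ : c₀ ∈ C) (hpath : ReflTransGen (MailLinked C) c₀ c) :
    ∃ d ∈ Ici c₀ ∩ lowerBounds (upperBounds C), c ≤ d := by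
  induction hpath with
  | refl => exact ⟨c₀, ⟨le_rfl, subset_lowerBounds_upperBounds C hc₀⟩, le_rfl⟩
  | @tail x y _ hxy ih =>
    obtain ⟨d, ⟨hc₀d, hdC⟩, hxd⟩ := ih
    obtain ⟨-, hyC, b, hbx, hby⟩ := hxy
    obtain ⟨s, hs⟩ := h.exists_isLUB_pair hby (hbx.trans hxd)
    have hys : y ≤ s := hs.1 (mem_insert y {d})
    have hds : d ≤ s := hs.1 (mem_insert_of_mem y rfl)
    refine ⟨s, ⟨hc₀d.trans hds, fun u hu => hs.2 ?_⟩, hys⟩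
    simpa [upperBounds_insert] using ⟨hu hyC, hdC hu⟩

end IsChainmail

theorem mailConnected_has_join (h : IsChainmail P)
    (C : Set P) (hC : MailConnected C) : ∃ j : P, IsLUB C j := by
  obtain ⟨⟨c₀, hc₀⟩, hlinked⟩ := hC
  set D := Ici c₀ ∩ lowerBounds (upperBounds C)
  have hCD : IsCofinalFor C D := fun c hc =>
    h.exists_ge_of_reflTransGen_mailLinked hc₀ (hlinked c₀ hc₀ c hc)
  obtain ⟨j, hj⟩ := h D ⟨hCD.nonempty ⟨c₀, hc₀⟩, c₀, fun _ hx => hx.1⟩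
  exact ⟨j, (isLUB_congr (upperBounds_eq_of_isCofinalFor hCD inter_subset_right)).1 hj⟩
end

section
/- A poset is a chainmail if and only if every mail-connected subset has a join. -/
/-!
Fix `c₀ ∈ C`. In a chainmail the elements above `c₀` lying below every upper bound of `C` form a
mail, whose join `j` is the greatest such element. Along a path from `c₀` in `C`, each next
element `z` shares a lower bound with `j`, so the join of `{j, z}` is again such an element and
hence `z ≤ j`. Thus `j` is the join of `C`.
-/

variable {P : Type*} [PartialOrder P]

open Set

theorem Mail.mailConnected {M : Set P} (hM : Mail M) : MailConnected M := by
  obtain ⟨hne, b, hb⟩ := hM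
  exact ⟨hne, fun c hc d hd => .single ⟨hc, hd, b, hb c hc, hb d hd⟩⟩

theorem mail_inter_Ici {A : Set P} {a : P} (ha : a ∈ A) : Mail (A ∩ Ici a) :=
  ⟨⟨a, ha, le_rfl⟩, a, fun _ hx => hx.2⟩

namespace IsChainmail

theorem exists_isGreatest_lowerBounds_inter_Ici (h : IsChainmail P) {X : Set P} {a : P}
    (ha : a ∈ lowerBounds X) : ∃ j, IsGreatest (lowerBounds X ∩ Ici a) j := by
  obtain ⟨j, hj⟩ := h _ (mail_inter_Ici ha)
  exact ⟨j, ⟨fun x hx => hj.2 fun _ hs => hs.1 hx, hj.1 ⟨ha, le_rfl⟩⟩, hj.1⟩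

theorem le_of_isGreatest_lowerBounds_inter_Ici (h : IsChainmail P) {X : Set P} {a j z b : P}
    (hj : IsGreatest (lowerBounds X ∩ Ici a) j) (hz : z ∈ lowerBounds X)
    (hbj : b ≤ j) (hbz : b ≤ z) : z ≤ j := by
  obtain ⟨s, hs⟩ := h {j, z} ⟨insert_nonempty _ _, b, by simp [hbj, hbz]⟩
  have hjs : j ≤ s := hs.1 (mem_insert _ _)
  have hzs : z ≤ s := hs.1 (mem_insert_of_mem _ rfl)
  have hsX : s ∈ lowerBounds X := fun x hx => hs.2 <| by
    rintro _ (rfl | rfl)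
    exacts [hj.1.1 hx, hz hx]
  exact hzs.trans (hj.2 ⟨hsX, hj.1.2.trans hjs⟩)

end IsChainmail

theorem chainmail_iff_mailConnected_joins :
    IsChainmail P ↔ ∀ C : Set P, MailConnected C → ∃ j : P, IsLUB C j := by
  refine ⟨fun h C hC => ?_, fun h M hM => h M hM.mailConnected⟩
  obtain ⟨⟨c₀, hc₀⟩, hconn⟩ := hC
  have hC : C ⊆ lowerBounds (upperBounds C) := subset_lowerBounds_upperBounds C
  obtain ⟨j, hj⟩ := h.exists_isGreatest_lowerBounds_inter_Ici (hC hc₀)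
  have hCj : ∀ c ∈ C, c ≤ j := fun c hc => by
    induction hconn c₀ hc₀ c hc with
    | refl => exact hj.1.2
    | tail _ hyz ih =>
      obtain ⟨hy, hz, b, hby, hbz⟩ := hyz
      exact h.le_of_isGreatest_lowerBounds_inter_Ici hj (hC hz) (hby.trans (ih hy)) hbz
  exact ⟨j, hCj, hj.1.1⟩
end

section
/- For a connectivity space (X, 𝒞) — where ∅ ∈ 𝒞 and any subfamily Z ⊆ 𝒞 with nonempty intersection has union in 𝒞 — the poset of nonempty members of 𝒞 ordered by inclusion is a chainmail, with joins of mails given by unions. -/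
theorem connectivity_space_chainmail_general {X : Type*} (𝒞 : Set (Set X))
    (hc1 : ∀ Z ⊆ 𝒞, (⋂₀ Z).Nonempty → ⋃₀ Z ∈ 𝒞)
    (M : Set (Set X)) (hM : M ⊆ {C | C ∈ 𝒞 ∧ C.Nonempty}) (hMne : M.Nonempty)
    (hlb : ∃ B, (B ∈ 𝒞 ∧ B.Nonempty) ∧ ∀ C ∈ M, B ⊆ C) :
    (⋃₀ M ∈ 𝒞 ∧ (⋃₀ M).Nonempty) ∧ (∀ C ∈ M, C ⊆ ⋃₀ M) ∧
      ∀ U, (U ∈ 𝒞 ∧ U.Nonempty) → (∀ C ∈ M, C ⊆ U) → ⋃₀ M ⊆ U := by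
  obtain ⟨B, ⟨-, x, hxB⟩, hBM⟩ := hlb
  obtain ⟨C₀, hC₀⟩ := hMne
  have hx : x ∈ ⋂₀ M := fun C hC => hBM C hC hxB
  exact ⟨⟨hc1 M (fun C hC => (hM hC).1) ⟨x, hx⟩, x, C₀, hC₀, hx C₀ hC₀⟩,
    fun _ => Set.subset_sUnion_of_mem, fun _ _ => Set.sUnion_subset⟩

theorem connectivity_space_chainmail {X : Type*} (𝒞 : Set (Set X))
    (hc0 : (∅ : Set X) ∈ 𝒞)
    (hc1 : ∀ Z ⊆ 𝒞, (⋂₀ Z).Nonempty → ⋃₀ Z ∈ 𝒞)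
    (M : Set (Set X)) (hM : M ⊆ {C | C ∈ 𝒞 ∧ C.Nonempty}) (hMne : M.Nonempty)
    (hlb : ∃ B, (B ∈ 𝒞 ∧ B.Nonempty) ∧ ∀ C ∈ M, B ⊆ C) :
    (⋃₀ M ∈ 𝒞 ∧ (⋃₀ M).Nonempty) ∧ (∀ C ∈ M, C ⊆ ⋃₀ M) ∧
      ∀ U, (U ∈ 𝒞 ∧ U.Nonempty) → (∀ C ∈ M, C ⊆ U) → ⋃₀ M ⊆ U :=
  connectivity_space_chainmail_general 𝒞 hc1 M hM hMne hlb
end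

section
/- For any chainmail Γ, the poset 𝒟(Γ) of totally disconnected subsets of Γ, ordered by D₁ ≤ D₂ iff every element of D₁ is below some element of D₂, is a complete lattice. -/
variable {P : Type*} [PartialOrder P]

def TotDisc (D : Set P) : Prop :=
  ∀ d ∈ D, ∀ e ∈ D, d ≠ e → ¬ ∃ b : P, b ≤ d ∧ b ≤ e

/-- The order on totally disconnected subsets. -/
def DLe (D₁ D₂ : Set P) : Prop := ∀ d ∈ D₁, ∃ e ∈ D₂, d ≤ e

/-!
For joins, let `X` be the union of the family and `Z` the set of elements lying below some element
of every totally disconnected upper bound of `X`. All elements of a mail in `Z` lie below the same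
element of such an upper bound, so `Z` is closed under joins of mails. Hence (Zorn, applied to the
parts of chains above a point, which are mails) every element of `Z` lies below a maximal one, and
two maximal elements of `Z` with a common lower bound both equal the join of the pair. The maximal
elements of `Z` are therefore the join.
-/

theorem TotDisc.eq_of_le_of_le {U : Set P} (hU : TotDisc U) {u v b : P} (hu : u ∈ U)
    (hv : v ∈ U) (hbu : b ≤ u) (hbv : b ≤ v) : u = v :=
  by_contra fun hne => hU u hu v hv hne ⟨b, hbu, hbv⟩

theorem TotDisc.subset_of_dLe {D₁ D₂ : Set P} (h₁ : TotDisc D₁) (h₁₂ : DLe D₁ D₂)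
    (h₂₁ : DLe D₂ D₁) : D₁ ⊆ D₂ := by
  intro d hd
  obtain ⟨e, he, hde⟩ := h₁₂ d hd
  obtain ⟨f, hf, hef⟩ := h₂₁ e he
  have hdf : d = f := h₁.eq_of_le_of_le hd hf le_rfl (hde.trans hef)
  rwa [le_antisymm hde (hdf ▸ hef)]

theorem TotDisc.exists_mem_upperBounds_of_mail {U M : Set P} (hU : TotDisc U) (hM : Mail M)
    (hMU : DLe M U) : ∃ u ∈ U, u ∈ upperBounds M := by
  obtain ⟨⟨m₀, hm₀⟩, b, hb⟩ := hM
  obtain ⟨u₀, hu₀, hm₀u₀⟩ := hMU m₀ hm₀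
  refine ⟨u₀, hu₀, fun m hm => ?_⟩
  obtain ⟨u, hu, hmu⟩ := hMU m hm
  rwa [hU.eq_of_le_of_le hu₀ hu ((hb m₀ hm₀).trans hm₀u₀) ((hb m hm).trans hmu)]

theorem mail_pair {x y b : P} (hx : b ≤ x) (hy : b ≤ y) : Mail ({x, y} : Set P) :=
  ⟨Set.insert_nonempty x {y}, b, by simp [hx, hy]⟩

def totDiscBounded (X : Set P) : Set P :=
  {z | ∀ U : Set P, TotDisc U → DLe X U → ∃ u ∈ U, z ≤ u}

theorem subset_totDiscBounded (X : Set P) : X ⊆ totDiscBounded X :=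
  fun x hx _ _ hXU => hXU x hx

theorem isLUB_mem_totDiscBounded {X M : Set P} {j : P} (hMX : M ⊆ totDiscBounded X)
    (hM : Mail M) (hj : IsLUB M j) : j ∈ totDiscBounded X := by
  intro U hU hXU
  obtain ⟨u, hu, hMu⟩ := hU.exists_mem_upperBounds_of_mail hM fun m hm => hMX hm U hU hXU
  exact ⟨u, hu, hj.2 hMu⟩

theorem IsChainmail.exists_le_maximal (hΓ : IsChainmail P) {Z : Set P}
    (hZ : ∀ M ⊆ Z, Mail M → ∀ j, IsLUB M j → j ∈ Z) {z : P} (hz : z ∈ Z) :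
    ∃ m, z ≤ m ∧ Maximal (· ∈ Z) m := by
  refine zorn_le_nonempty₀ Z (fun c hcZ hc y hy => ?_) z hz
  have hM : Mail {x ∈ c | y ≤ x} := ⟨⟨y, hy, le_rfl⟩, y, fun x hx => hx.2⟩
  obtain ⟨s, hs⟩ := hΓ _ hM
  refine ⟨s, hZ _ (fun x hx => hcZ hx.1) hM s hs, fun x hx => ?_⟩
  rcases hc.total hy hx with hyx | hxy
  · exact hs.1 ⟨hx, hyx⟩
  · exact hxy.trans (hs.1 ⟨hy, le_rfl⟩)

theorem IsChainmail.totDisc_maximal (hΓ : IsChainmail P) {Z : Set P}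
    (hZ : ∀ M ⊆ Z, Mail M → ∀ j, IsLUB M j → j ∈ Z) : TotDisc {m | Maximal (· ∈ Z) m} := by
  rintro j₁ hj₁ j₂ hj₂ hne ⟨b, hb₁, hb₂⟩
  obtain ⟨s, hs⟩ := hΓ _ (mail_pair hb₁ hb₂)
  have hsZ : s ∈ Z :=
    hZ _ (Set.insert_subset hj₁.prop (Set.singleton_subset_iff.2 hj₂.prop)) (mail_pair hb₁ hb₂) s hs
  exact hne ((hj₁.eq_of_le hsZ (hs.1 (by simp))).trans (hj₂.eq_of_le hsZ (hs.1 (by simp))).symm)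

theorem totDisc_complete_lattice (hΓ : IsChainmail P) :
    (∀ D₁ D₂ : Set P, TotDisc D₁ → TotDisc D₂ →
      DLe D₁ D₂ → DLe D₂ D₁ → D₁ = D₂) ∧
    (∀ 𝒮 : Set (Set P), (∀ D ∈ 𝒮, TotDisc D) →
      ∃ J : Set P, TotDisc J ∧ (∀ D ∈ 𝒮, DLe D J) ∧
        ∀ U : Set P, TotDisc U → (∀ D ∈ 𝒮, DLe D U) → DLe J U) := by
  refine ⟨fun D₁ D₂ h₁ h₂ h₁₂ h₂₁ => (h₁.subset_of_dLe h₁₂ h₂₁).antisymm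
    (h₂.subset_of_dLe h₂₁ h₁₂), fun 𝒮 _ => ?_⟩
  set Z := totDiscBounded (⋃₀ 𝒮)
  have hZ : ∀ M ⊆ Z, Mail M → ∀ j, IsLUB M j → j ∈ Z :=
    fun _ hMZ hM _ hj => isLUB_mem_totDiscBounded hMZ hM hj
  refine ⟨{m | Maximal (· ∈ Z) m}, hΓ.totDisc_maximal hZ, fun D hD d hd => ?_,
    fun U hU h𝒮U m hm => hm.prop U hU ?_⟩
  · obtain ⟨m, hdm, hm⟩ := hΓ.exists_le_maximal hZ (subset_totDiscBounded _ ⟨D, hD, hd⟩)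
    exact ⟨m, hm, hdm⟩
  · rintro x ⟨D, hD, hx⟩
    exact h𝒮U D hD x hx
end

section
/- For any chainmail Γ, a set S of totally disconnected subsets of Γ is separated in the complete lattice 𝒟(Γ) if and only if ∅ ∉ S, the members of S are pairwise disjoint, and ⋃S is totally disconnected in Γ; in that case ⋃S is the join of S in 𝒟(Γ). -/
variable {P : Type*} [PartialOrder P]

/-- Separatedness in the complete lattice of totally disconnected sets:
the bottom element ∅ is excluded and any two distinct members have
greatest lower bound ∅. -/
def SeparatedD (S : Set (Set P)) : Prop :=
  (∅ : Set P) ∉ S ∧ ∀ D₁ ∈ S, ∀ D₂ ∈ S, D₁ ≠ D₂ →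
    ∀ E : Set P, TotDisc E → DLe E D₁ → DLe E D₂ → E = ∅

/-! Two members of `S` have a nonempty common lower bound in `𝒟(Γ)` exactly when some point of `Γ`
lies below an element of each of them, since the singleton of such a point is a totally disconnected
lower bound. Separation thus says that elements taken from distinct members never share a lower
bound; in particular the members are disjoint, and together with the total disconnectedness of each
member this is total disconnectedness of `⋃₀ S`. -/

theorem totDisc_singleton (b : P) : TotDisc ({b} : Set P) := by
  rintro d rfl e rfl hne
  exact absurd rfl hne

theorem dLe_singleton {b d : P} {D : Set P} (hd : d ∈ D) (hbd : b ≤ d) : DLe {b} D := by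
  rintro x rfl
  exact ⟨d, hd, hbd⟩

theorem dLe_sUnion {S : Set (Set P)} {D : Set P} (hD : D ∈ S) : DLe D (⋃₀ S) :=
  fun d hd => ⟨d, ⟨D, hD, hd⟩, le_rfl⟩

theorem sUnion_dLe {S : Set (Set P)} {U : Set P} (hU : ∀ D ∈ S, DLe D U) : DLe (⋃₀ S) U := by
  rintro d ⟨D, hD, hd⟩
  exact hU D hD d hd

namespace SeparatedD

variable {S : Set (Set P)}

theorem false_of_common_lowerBound (hsep : SeparatedD S) {D₁ D₂ : Set P} (h₁ : D₁ ∈ S)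
    (h₂ : D₂ ∈ S) (hD : D₁ ≠ D₂) {d e b : P} (hd : d ∈ D₁) (he : e ∈ D₂) (hbd : b ≤ d)
    (hbe : b ≤ e) : False :=
  Set.singleton_ne_empty b <|
    hsep.2 D₁ h₁ D₂ h₂ hD {b} (totDisc_singleton b) (dLe_singleton hd hbd) (dLe_singleton he hbe)

theorem disjoint (hsep : SeparatedD S) {D₁ D₂ : Set P} (h₁ : D₁ ∈ S) (h₂ : D₂ ∈ S)
    (hD : D₁ ≠ D₂) : Disjoint D₁ D₂ :=
  Set.disjoint_left.mpr fun _ hx₁ hx₂ =>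
    hsep.false_of_common_lowerBound h₁ h₂ hD hx₁ hx₂ le_rfl le_rfl

theorem totDisc_sUnion (hsep : SeparatedD S) (hS : ∀ D ∈ S, TotDisc D) : TotDisc (⋃₀ S) := by
  rintro d ⟨D₁, h₁, hd⟩ e ⟨D₂, h₂, he⟩ hne ⟨b, hbd, hbe⟩
  by_cases hD : D₁ = D₂
  · subst hD
    exact hS D₁ h₁ d hd e he hne ⟨b, hbd, hbe⟩
  · exact hsep.false_of_common_lowerBound h₁ h₂ hD hd he hbd hbe

end SeparatedD

theorem separatedD_of_disjoint_of_totDisc_sUnion {S : Set (Set P)} (hne : (∅ : Set P) ∉ S)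
    (hdisj : ∀ D₁ ∈ S, ∀ D₂ ∈ S, D₁ ≠ D₂ → Disjoint D₁ D₂) (htd : TotDisc (⋃₀ S)) :
    SeparatedD S := by
  refine ⟨hne, fun D₁ h₁ D₂ h₂ hD E _ hE₁ hE₂ => Set.eq_empty_iff_forall_notMem.mpr ?_⟩
  intro x hx
  obtain ⟨d, hd, hxd⟩ := hE₁ x hx
  obtain ⟨e, he, hxe⟩ := hE₂ x hx
  by_cases hde : d = e
  · exact Set.disjoint_left.mp (hdisj D₁ h₁ D₂ h₂ hD) hd (hde ▸ he)
  · exact htd d ⟨D₁, h₁, hd⟩ e ⟨D₂, h₂, he⟩ hde ⟨x, hxd, hxe⟩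

theorem separated_in_totDisc_lattice_general
    (S : Set (Set P)) (hS : ∀ D ∈ S, TotDisc D) :
    (SeparatedD S ↔
      ((∅ : Set P) ∉ S ∧ (∀ D₁ ∈ S, ∀ D₂ ∈ S, D₁ ≠ D₂ → Disjoint D₁ D₂) ∧
        TotDisc (⋃₀ S))) ∧
    (SeparatedD S →
      TotDisc (⋃₀ S) ∧ (∀ D ∈ S, DLe D (⋃₀ S)) ∧
        ∀ U : Set P, TotDisc U → (∀ D ∈ S, DLe D U) → DLe (⋃₀ S) U) := by
  refine ⟨⟨fun hsep => ?_, fun ⟨hne, hdisj, htd⟩ =>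
    separatedD_of_disjoint_of_totDisc_sUnion hne hdisj htd⟩, fun hsep => ?_⟩
  · exact ⟨hsep.1, fun _ h₁ _ h₂ hD => hsep.disjoint h₁ h₂ hD, hsep.totDisc_sUnion hS⟩
  · exact ⟨hsep.totDisc_sUnion hS, fun _ => dLe_sUnion, fun _ _ => sUnion_dLe⟩

theorem separated_in_totDisc_lattice (hΓ : IsChainmail P)
    (S : Set (Set P)) (hS : ∀ D ∈ S, TotDisc D) :
    (SeparatedD S ↔
      ((∅ : Set P) ∉ S ∧ (∀ D₁ ∈ S, ∀ D₂ ∈ S, D₁ ≠ D₂ → Disjoint D₁ D₂) ∧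
        TotDisc (⋃₀ S))) ∧
    (SeparatedD S →
      TotDisc (⋃₀ S) ∧ (∀ D ∈ S, DLe D (⋃₀ S)) ∧
        ∀ U : Set P, TotDisc U → (∀ D ∈ S, DLe D U) → DLe (⋃₀ S) U) :=
  separated_in_totDisc_lattice_general S hS
end
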